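/- arXiv:2405.04733 — 5 statements merged into one kernel-verified Lean document; each statement's English description precedes it below -/
import Mathlib

section
/- Let $I_{m,k}$ denote the maximal number of (open) orthants in $\mathbb{R}^m$ intersected by a $k$-dimensional affine subspace, with $1 \le k \le m$. Then $I_{m,k} \le (em/k)^k$. -/
/-!
Encode an orthant by its set of positive coordinates. If `V` met all `2^#s` orthant patterns on
a coordinate set `s` with `#s > dim V`, a nonzero vector `c` orthogonal to the direction of `V`
and supported on `s` would exist; taking `x, y ∈ V` with the sign patterns of `c` and of `-c` on
`s` gives `⟪x - y, c⟫ > 0`, a contradiction. So the family of orthants met by `V` has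
VC-dimension at most `k`, and the Sauer–Shelah lemma bounds its size by `∑_{i ≤ k} (m choose i)`,
which is at most `(e m / k)^k` by comparing with `(1 + k/m)^m ≤ e^k`.
-/

open Finset Module Real

def orthant (m : ℕ) (ε : Fin m → Bool) : Set (EuclideanSpace ℝ (Fin m)) :=
  {u | ∀ i, if ε i then 0 < u i else u i < 0}

theorem sum_choose_le_exp_mul_div_pow {m k : ℕ} (hkm : k ≤ m) :
    ∑ i ∈ Iic k, (m.choose i : ℝ) ≤ (exp 1 * m / k) ^ k := by
  rcases k.eq_zero_or_pos with rfl | hk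
  · simp [Iic_ofNat]
  have hm : (0 : ℝ) < m := by exact_mod_cast hk.trans_le hkm
  set r : ℝ := k / m with hr
  have hr0 : 0 < r := by positivity
  have hr1 : r ≤ 1 := div_le_one_of_le₀ (by exact_mod_cast hkm) hm.le
  have key : (∑ i ∈ Iic k, (m.choose i : ℝ)) * r ^ k ≤ exp 1 ^ k :=
    calc (∑ i ∈ Iic k, (m.choose i : ℝ)) * r ^ k
        ≤ ∑ i ∈ Iic k, (m.choose i : ℝ) * r ^ i := by
          rw [sum_mul]
          exact sum_le_sum fun i hi => mul_le_mul_of_nonneg_left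
            (pow_le_pow_of_le_one hr0.le hr1 (mem_Iic.1 hi)) (Nat.cast_nonneg _)
      _ ≤ ∑ i ∈ range (m + 1), (m.choose i : ℝ) * r ^ i := by
          refine sum_le_sum_of_subset_of_nonneg (fun i hi => ?_) fun i _ _ => by positivity
          simp only [mem_Iic, mem_range] at hi ⊢; omega
      _ = (r + 1) ^ m := by rw [add_pow]; simp [mul_comm]
      _ ≤ exp r ^ m := by gcongr; exact add_one_le_exp r
      _ = exp 1 ^ k := by
          rw [← exp_nat_mul, ← exp_nat_mul, hr]
          field_simp
  rwa [show exp 1 * m / k = exp 1 / r by rw [hr]; field_simp, div_pow, le_div_iff₀ (by positivity)]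

variable {ι : Type*} [Fintype ι]

theorem exists_ne_zero_mem_orthogonal_of_finrank_lt_card
    (W : Submodule ℝ (EuclideanSpace ℝ ι)) (s : Finset ι) (h : finrank ℝ W < #s) :
    ∃ c ∈ Wᗮ, c ≠ 0 ∧ ∀ i ∉ s, c i = 0 := by
  classical
  let U := W ⊔ Submodule.span ℝ (Set.range fun i : ↥sᶜ => EuclideanSpace.single (i : ι) (1 : ℝ))
  have hU : finrank ℝ U < finrank ℝ (EuclideanSpace ℝ ι) :=
    calc finrank ℝ U ≤ finrank ℝ W + Fintype.card ↥sᶜ :=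
          (Submodule.finrank_add_le_finrank_add_finrank _ _).trans
            (Nat.add_le_add_left (finrank_range_le_card _) _)
      _ < Fintype.card ι := by
          rw [Fintype.card_coe, card_compl]
          have := s.card_le_univ
          omega
      _ = _ := (finrank_euclideanSpace).symm
  have hUtop : U ≠ ⊤ := fun hTop => hU.ne (hTop ▸ finrank_top ℝ _)
  obtain ⟨c, hcU, hc0⟩ := Submodule.exists_mem_ne_zero_of_ne_bot
    (mt Submodule.orthogonal_eq_bot_iff.1 hUtop)
  refine ⟨c, Submodule.orthogonal_le le_sup_left hcU, hc0, fun i hi => ?_⟩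
  have hsingle : EuclideanSpace.single i (1 : ℝ) ∈ U :=
    Submodule.mem_sup_right (Submodule.subset_span ⟨⟨i, mem_compl.2 hi⟩, rfl⟩)
  have := Submodule.inner_right_of_mem_orthogonal hsingle hcU
  simpa [EuclideanSpace.inner_single_left] using this

theorem card_le_finrank_direction_of_forall_exists_sign
    (V : AffineSubspace ℝ (EuclideanSpace ℝ ι)) (s : Finset ι)
    (h : ∀ t ⊆ s, ∃ x ∈ V, ∀ i ∈ s, (i ∈ t → 0 < x i) ∧ (i ∉ t → x i < 0)) :
    #s ≤ finrank ℝ V.direction := by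
  by_contra! hlt
  obtain ⟨c, hcV, hc0, hcs⟩ := exists_ne_zero_mem_orthogonal_of_finrank_lt_card _ s hlt
  obtain ⟨x, hxV, hx⟩ := h (s.filter (0 < c ·)) (filter_subset _ _)
  obtain ⟨y, hyV, hy⟩ := h (s.filter (c · < 0)) (filter_subset _ _)
  have hpos : ∀ i, c i ≠ 0 → 0 < c i * (x i - y i) := by
    intro i hci
    have hi : i ∈ s := by_contra fun hi => hci (hcs i hi)
    rcases hci.lt_or_gt with hneg | hpos
    · have hxi := (hx i hi).2 (by simp [hneg.not_gt])
      have hyi := (hy i hi).1 (by simp [hi, hneg])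
      exact mul_pos_of_neg_of_neg hneg (by linarith)
    · have hxi := (hx i hi).1 (by simp [hi, hpos])
      have hyi := (hy i hi).2 (by simp [hpos.not_gt])
      exact mul_pos hpos (by linarith)
  obtain ⟨j, hj⟩ : ∃ j, c j ≠ 0 := by
    by_contra! hall
    exact hc0 (by ext i; exact hall i)
  have hsum : 0 < ∑ i, c i * (x i - y i) :=
    sum_pos' (fun i _ => (eq_or_ne (c i) 0).elim (fun h0 => by simp [h0]) fun h => (hpos i h).le)
      ⟨j, mem_univ j, hpos j hj⟩
  have horth := Submodule.inner_right_of_mem_orthogonal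
    (AffineSubspace.vsub_mem_direction hxV hyV) hcV
  exact hsum.ne' (by simpa [PiLp.inner_apply] using horth)

open Classical in
/-- The orthants met by `V`, each encoded by its set of positive coordinates. -/
noncomputable def orthantsMeeting (V : AffineSubspace ℝ (EuclideanSpace ℝ ι)) :
    Finset (Finset ι) :=
  univ.filter fun t => ∃ x ∈ V, ∀ i, (i ∈ t → 0 < x i) ∧ (i ∉ t → x i < 0)

theorem mem_orthantsMeeting {V : AffineSubspace ℝ (EuclideanSpace ℝ ι)} {t : Finset ι} :
    t ∈ orthantsMeeting V ↔ ∃ x ∈ V, ∀ i, (i ∈ t → 0 < x i) ∧ (i ∉ t → x i < 0) := by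
  simp [orthantsMeeting]

variable [DecidableEq ι]

theorem vcDim_orthantsMeeting_le (V : AffineSubspace ℝ (EuclideanSpace ℝ ι)) :
    (orthantsMeeting V).vcDim ≤ finrank ℝ V.direction := by
  refine Finset.sup_le fun s hs => card_le_finrank_direction_of_forall_exists_sign V s ?_
  intro t ht
  obtain ⟨u, hu, hsu⟩ := mem_shatterer.1 hs ht
  obtain ⟨x, hxV, hx⟩ := mem_orthantsMeeting.1 hu
  refine ⟨x, hxV, fun i hi => ⟨fun hit => (hx i).1 ?_, fun hit => (hx i).2 fun hiu => hit ?_⟩⟩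
  · exact (mem_inter.1 (hsu ▸ hit)).2
  · exact hsu ▸ mem_inter.2 ⟨hi, hiu⟩

theorem card_orthantsMeeting_le (V : AffineSubspace ℝ (EuclideanSpace ℝ ι)) :
    #(orthantsMeeting V) ≤ ∑ i ∈ Iic (finrank ℝ V.direction), (Fintype.card ι).choose i :=
  calc #(orthantsMeeting V) ≤ #(orthantsMeeting V).shatterer := card_le_card_shatterer _
    _ ≤ ∑ i ∈ Iic (orthantsMeeting V).vcDim, (Fintype.card ι).choose i :=
        card_shatterer_le_sum_vcDim
    _ ≤ _ := sum_le_sum_of_subset (Iic_subset_Iic.2 (vcDim_orthantsMeeting_le V))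

theorem natCard_orthant_inter_nonempty_le {m : ℕ}
    (V : AffineSubspace ℝ (EuclideanSpace ℝ (Fin m))) :
    Nat.card {ε : Fin m → Bool // (orthant m ε ∩ (V : Set (EuclideanSpace ℝ (Fin m)))).Nonempty}
      ≤ #(orthantsMeeting V) := by
  rw [← Nat.card_eq_finsetCard]
  refine Nat.card_le_card_of_injective
    (fun ε => ⟨univ.filter (ε.1 · = true), ?_⟩) fun ε ε' h => Subtype.ext (funext fun i => ?_)
  · obtain ⟨x, hxo, hxV⟩ := ε.2
    refine mem_orthantsMeeting.2 ⟨x, hxV, fun i => ⟨fun hi => ?_, fun hi => ?_⟩⟩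
    · simpa [(mem_filter.1 hi).2] using hxo i
    · simpa [Bool.eq_false_iff.2 (by simpa using hi)] using hxo i
  · have := congrArg (i ∈ ·.1) h
    simp only [mem_filter, mem_univ, true_and, eq_iff_iff] at this
    cases h1 : ε.1 i <;> cases h2 : ε'.1 i <;> simp_all

theorem stmt0_general (m k : ℕ) (hkm : k ≤ m)
    (V : AffineSubspace ℝ (EuclideanSpace ℝ (Fin m)))
    (hV : Module.finrank ℝ V.direction = k) :
    (Nat.card {ε : Fin m → Bool //
        (orthant m ε ∩ (V : Set (EuclideanSpace ℝ (Fin m)))).Nonempty} : ℝ)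
      ≤ (Real.exp 1 * m / k) ^ k := by
  have hcount := card_orthantsMeeting_le V
  rw [hV, Fintype.card_fin] at hcount
  calc (Nat.card _ : ℝ) ≤ #(orthantsMeeting V) := by
        exact_mod_cast natCard_orthant_inter_nonempty_le V
    _ ≤ ∑ i ∈ Iic k, (m.choose i : ℝ) := by exact_mod_cast hcount
    _ ≤ _ := sum_choose_le_exp_mul_div_pow hkm

/-- The number of open orthants of `ℝ^m` intersected by a `k`-dimensional affine
subspace (`1 ≤ k ≤ m`) is at most `(e m / k)^k`. -/
theorem stmt0 (m k : ℕ) (hk : 1 ≤ k) (hkm : k ≤ m)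
    (V : AffineSubspace ℝ (EuclideanSpace ℝ (Fin m)))
    (hV : Module.finrank ℝ V.direction = k) :
    (Nat.card {ε : Fin m → Bool //
        (orthant m ε ∩ (V : Set (EuclideanSpace ℝ (Fin m)))).Nonempty} : ℝ)
      ≤ (Real.exp 1 * m / k) ^ k :=
  stmt0_general m k hkm V hV
end

section
/- Let $0 < \alpha \le \beta$ and let $\mathbf{u}, \mathbf{v} \in \mathbb{R}^n$ satisfy $\alpha \le \|\mathbf{u}\|_2, \|\mathbf{v}\|_2 \le \beta$. Define $\mathrm{dist}(\mathbf{u},\mathbf{v}) = \min\{\|\mathbf{u}-\mathbf{v}\|_2, \|\mathbf{u}+\mathbf{v}\|_2\}$. Then $\tfrac{1}{2\beta}\|\mathbf{u}\mathbf{u}^\top - \mathbf{v}\mathbf{v}^\top\|_F \le \mathrm{dist}(\mathbf{u},\mathbf{v}) \le \tfrac{1}{\alpha}\|\mathbf{u}\mathbf{u}^\top - \mathbf{v}\mathbf{v}^\top\|_F$. -/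
/-!
With `A = ‖u - v‖`, `B = ‖u + v‖` and `F = ‖uuᵀ - vvᵀ‖_F² = ‖u‖⁴ + ‖v‖⁴ - 2⟪u, v⟫²`, one has the
identity `2F = A²B² + (‖u‖² - ‖v‖²)²`, and `‖u‖² - ‖v‖² = ⟪u - v, u + v⟫`, so by Cauchy–Schwarz
`A²B² / 2 ≤ F ≤ A²B²`. Since `A, B ≤ 2β`, `AB ≤ 2β min(A, B)`; since `A² + B² = 2‖u‖² + 2‖v‖² ≥ 4α²`,
`max(A, B)² ≥ 2α²` and hence `A²B² ≥ 2α² min(A, B)²`.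
-/

open RealInnerProductSpace

section InnerProductSpace

variable {E : Type*} [NormedAddCommGroup E] [InnerProductSpace ℝ E]

theorem real_inner_sub_add_eq_sq_norm_sub_sq_norm (u v : E) :
    ⟪u - v, u + v⟫ = ‖u‖ ^ 2 - ‖v‖ ^ 2 := by
  rw [inner_sub_left, inner_add_right, inner_add_right, real_inner_self_eq_norm_sq,
    real_inner_self_eq_norm_sq, real_inner_comm v u]
  ring

theorem sq_norm_sub_mul_sq_norm_add_add_sq (u v : E) :
    ‖u - v‖ ^ 2 * ‖u + v‖ ^ 2 + (‖u‖ ^ 2 - ‖v‖ ^ 2) ^ 2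
      = 2 * (‖u‖ ^ 4 + ‖v‖ ^ 4 - 2 * ⟪u, v⟫ ^ 2) := by
  rw [norm_sub_sq_real, norm_add_sq_real]
  ring

theorem sq_norm_sub_mul_norm_add_le (u v : E) :
    (‖u - v‖ * ‖u + v‖) ^ 2 ≤ 2 * (‖u‖ ^ 4 + ‖v‖ ^ 4 - 2 * ⟪u, v⟫ ^ 2) := by
  rw [← sq_norm_sub_mul_sq_norm_add_add_sq, mul_pow]
  exact le_add_of_nonneg_right (sq_nonneg _)

theorem le_sq_norm_sub_mul_norm_add (u v : E) :
    ‖u‖ ^ 4 + ‖v‖ ^ 4 - 2 * ⟪u, v⟫ ^ 2 ≤ (‖u - v‖ * ‖u + v‖) ^ 2 := by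
  have hcs : (‖u‖ ^ 2 - ‖v‖ ^ 2) ^ 2 ≤ (‖u - v‖ * ‖u + v‖) ^ 2 := by
    rw [← real_inner_sub_add_eq_sq_norm_sub_sq_norm, ← sq_abs]
    exact pow_le_pow_left₀ (abs_nonneg _) (abs_real_inner_le_norm _ _) 2
  linarith [sq_norm_sub_mul_sq_norm_add_add_sq u v, mul_pow ‖u - v‖ ‖u + v‖ 2]

end InnerProductSpace

theorem EuclideanSpace.sum_sum_mul_sub_mul_sq {ι : Type*} [Fintype ι]
    (u v : EuclideanSpace ℝ ι) :
    ∑ i, ∑ j, (u i * u j - v i * v j) ^ 2 = ‖u‖ ^ 4 + ‖v‖ ^ 4 - 2 * ⟪u, v⟫ ^ 2 := by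
  have h4 : ∀ w : EuclideanSpace ℝ ι, ‖w‖ ^ 4 = (∑ i, w i ^ 2) * ∑ j, w j ^ 2 := fun w => by
    rw [show 4 = 2 * 2 by rfl, pow_mul, EuclideanSpace.real_norm_sq_eq, sq]
  have hinner : ⟪u, v⟫ = ∑ i, u i * v i := by
    simp only [PiLp.inner_apply, RCLike.inner_apply, conj_trivial, mul_comm]
  rw [h4, h4, hinner, sq (∑ i, u i * v i), Finset.sum_mul_sum, Finset.sum_mul_sum,
    Finset.sum_mul_sum, Finset.mul_sum, ← Finset.sum_add_distrib, ← Finset.sum_sub_distrib]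
  refine Finset.sum_congr rfl fun i _ => ?_
  rw [Finset.mul_sum, ← Finset.sum_add_distrib, ← Finset.sum_sub_distrib]
  exact Finset.sum_congr rfl fun j _ => by ring

section OrderedRing

variable {R : Type*} [CommRing R] [LinearOrder R] [IsStrictOrderedRing R]

theorem mul_le_mul_min_of_le {a b c : R} (ha : 0 ≤ a) (hb : 0 ≤ b) (hac : a ≤ c) (hbc : b ≤ c) :
    a * b ≤ c * min a b := by
  rw [← min_mul_max a b, mul_comm c]
  exact mul_le_mul_of_nonneg_left (max_le hac hbc) (le_min ha hb)

theorem two_mul_mul_sq_min_le {a b c : R} (ha : 0 ≤ a) (hb : 0 ≤ b) (h : 4 * c ≤ a ^ 2 + b ^ 2) :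
    2 * c * min a b ^ 2 ≤ (a * b) ^ 2 := by
  rcases le_total a b with hab | hab
  · have hcb : 2 * c ≤ b ^ 2 := by nlinarith [pow_le_pow_left₀ ha hab 2]
    rw [min_eq_left hab, mul_pow, mul_comm (a ^ 2)]
    exact mul_le_mul_of_nonneg_right hcb (sq_nonneg a)
  · have hca : 2 * c ≤ a ^ 2 := by nlinarith [pow_le_pow_left₀ hb hab 2]
    rw [min_eq_right hab, mul_pow]
    exact mul_le_mul_of_nonneg_right hca (sq_nonneg b)

end OrderedRing

theorem stmt5_general (n : ℕ) (α β : ℝ) (hα : 0 < α)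
    (u v : EuclideanSpace ℝ (Fin n))
    (hu1 : α ≤ ‖u‖) (hu2 : ‖u‖ ≤ β) (hv1 : α ≤ ‖v‖) (hv2 : ‖v‖ ≤ β) :
    (1 / (2 * β)) * Real.sqrt (∑ i, ∑ j, (u i * u j - v i * v j) ^ 2)
        ≤ min ‖u - v‖ ‖u + v‖ ∧
      min ‖u - v‖ ‖u + v‖
        ≤ (1 / α) * Real.sqrt (∑ i, ∑ j, (u i * u j - v i * v j) ^ 2) := by
  rw [EuclideanSpace.sum_sum_mul_sub_mul_sq]
  constructor
  · have hβ : 0 < 2 * β := by linarith [hu1.trans hu2]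
    rw [one_div, inv_mul_le_iff₀ hβ]
    calc √(‖u‖ ^ 4 + ‖v‖ ^ 4 - 2 * ⟪u, v⟫ ^ 2) ≤ ‖u - v‖ * ‖u + v‖ :=
          (Real.sqrt_le_left (by positivity)).2 (le_sq_norm_sub_mul_norm_add u v)
      _ ≤ 2 * β * min ‖u - v‖ ‖u + v‖ :=
          mul_le_mul_min_of_le (norm_nonneg _) (norm_nonneg _)
            ((norm_sub_le u v).trans (by linarith)) ((norm_add_le u v).trans (by linarith))
  · rw [one_div, ← div_eq_inv_mul, le_div_iff₀ hα]
    refine Real.le_sqrt_of_sq_le ?_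
    have hpar : 4 * α ^ 2 ≤ ‖u - v‖ ^ 2 + ‖u + v‖ ^ 2 := by
      rw [add_comm, parallelogram_law_with_norm ℝ]
      linarith [pow_le_pow_left₀ hα.le hu1 2, pow_le_pow_left₀ hα.le hv1 2]
    linarith [mul_pow (min ‖u - v‖ ‖u + v‖) α 2,
      two_mul_mul_sq_min_le (norm_nonneg _) (norm_nonneg _) hpar, sq_norm_sub_mul_norm_add_le u v]

/-- For `u, v` with norms in `[α, β]` (`0 < α ≤ β`), the phaseless distance
`dist(u,v) = min(‖u-v‖, ‖u+v‖)` is equivalent to the Frobenius norm of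
`u uᵀ - v vᵀ`:  `(2β)⁻¹ ‖uuᵀ - vvᵀ‖_F ≤ dist(u,v) ≤ α⁻¹ ‖uuᵀ - vvᵀ‖_F`. -/
theorem stmt5 (n : ℕ) (α β : ℝ) (hα : 0 < α) (hαβ : α ≤ β)
    (u v : EuclideanSpace ℝ (Fin n))
    (hu1 : α ≤ ‖u‖) (hu2 : ‖u‖ ≤ β) (hv1 : α ≤ ‖v‖) (hv2 : ‖v‖ ≤ β) :
    (1 / (2 * β)) * Real.sqrt (∑ i, ∑ j, (u i * u j - v i * v j) ^ 2)
        ≤ min ‖u - v‖ ‖u + v‖ ∧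
      min ‖u - v‖ ‖u + v‖
        ≤ (1 / α) * Real.sqrt (∑ i, ∑ j, (u i * u j - v i * v j) ^ 2) :=
  stmt5_general n α β hα u v hu1 hu2 hv1 hv2
end

section
/- Let $\tau > 0$ and let $\mathbf{a}$ be a standard Gaussian random vector in $\mathbb{R}^n$. For any $\mathbf{u},\mathbf{v} \in \mathbb{R}^n$ with $\mathbf{u} \ne \mathbf{v}$, the 'double separation probability' $\mathsf{P}^{(2)}_{\mathbf{u},\mathbf{v}} = \mathbb{P}\big(\mathrm{sign}(|\mathbf{a}^\top\mathbf{u}|-\tau) \ne \mathrm{sign}(|\mathbf{a}^\top\mathbf{v}|-\tau) \text{ and } \mathrm{sign}(\mathbf{a}^\top\mathbf{u}) \ne \mathrm{sign}(\mathbf{a}^\top\mathbf{v})\big)$ satisfies $\mathsf{P}^{(2)}_{\mathbf{u},\mathbf{v}} \le 4\exp\big(-\tau^2/(2\|\mathbf{u}-\mathbf{v}\|_2^2)\big)$. -/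
/-!
If `a` is separated from `u` and `v` both by the sign and by the threshold `τ` on the modulus,
then `a ⬝ u` and `a ⬝ v` have opposite signs and one of them has modulus at least `τ`, so
`|a ⬝ (u - v)| ≥ τ`. The linear form `a ↦ a ⬝ (u - v)` of a standard Gaussian vector is
sub-Gaussian with variance proxy `‖u - v‖²` (a sum of independent scaled Gaussians), and the
Chernoff bound on each of its two tails gives `2 exp (-τ² / (2 ‖u - v‖²))`.
-/

open MeasureTheory ProbabilityTheory NNReal

lemma Real.le_abs_sub_of_sign_ne {x y τ : ℝ}
    (h_abs : Real.sign (|x| - τ) ≠ Real.sign (|y| - τ)) (h_sign : Real.sign x ≠ Real.sign y) :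
    τ ≤ |x - y| := by
  have h_mul : x * y ≤ 0 := by
    by_contra! h
    rcases mul_pos_iff.mp h with ⟨hx, hy⟩ | ⟨hx, hy⟩
    · exact h_sign (by rw [Real.sign_of_pos hx, Real.sign_of_pos hy])
    · exact h_sign (by rw [Real.sign_of_neg hx, Real.sign_of_neg hy])
  have h_max : τ ≤ |x| ∨ τ ≤ |y| := by
    by_contra! h
    exact h_abs (by rw [Real.sign_of_neg (by linarith [h.1]), Real.sign_of_neg (by linarith [h.2])])
  rcases abs_cases x with ⟨hx, _⟩ | ⟨hx, _⟩ <;> rcases abs_cases y with ⟨hy, _⟩ | ⟨hy, _⟩ <;>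
    rcases abs_cases (x - y) with ⟨hd, _⟩ | ⟨hd, _⟩ <;> rcases h_max with h | h <;> nlinarith

lemma ProbabilityTheory.HasSubgaussianMGF.measureReal_abs_ge_le {Ω : Type*} {mΩ : MeasurableSpace Ω}
    {μ : Measure Ω} {X : Ω → ℝ} {c : ℝ≥0} (h : HasSubgaussianMGF X c μ) {ε : ℝ} (hε : 0 ≤ ε) :
    μ.real {ω | ε ≤ |X ω|} ≤ 2 * Real.exp (-ε ^ 2 / (2 * c)) := by
  have h_union : {ω | ε ≤ |X ω|} = {ω | ε ≤ X ω} ∪ {ω | ε ≤ (-X) ω} := by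
    ext ω
    simp [le_abs]
  calc μ.real {ω | ε ≤ |X ω|} ≤ μ.real {ω | ε ≤ X ω} + μ.real {ω | ε ≤ (-X) ω} :=
        h_union ▸ measureReal_union_le _ _
    _ ≤ _ := by linarith [h.measure_ge_le hε, h.neg.measure_ge_le hε]

lemma ProbabilityTheory.hasSubgaussianMGF_id_gaussianReal (v : ℝ≥0) :
    HasSubgaussianMGF id v (gaussianReal 0 v) where
  integrable_exp_mul := integrable_exp_mul_gaussianReal
  mgf_le t := by simp [mgf_id_gaussianReal]

lemma ProbabilityTheory.hasSubgaussianMGF_sum_mul_pi_gaussianReal {ι : Type*} [Fintype ι]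
    (w : EuclideanSpace ℝ ι) :
    HasSubgaussianMGF (fun a : ι → ℝ => ∑ i, a i * w i) (‖w‖₊ ^ 2)
      (Measure.pi fun _ => gaussianReal 0 1) := by
  have h_coord (i : ι) : HasSubgaussianMGF (fun a : ι → ℝ => a i * w i) (‖w i‖₊ ^ 2)
      (Measure.pi fun _ => gaussianReal 0 1) := by
    have h_eval := hasSubgaussianMGF_id_gaussianReal 1
    rw [← (measurePreserving_eval (fun _ : ι => gaussianReal 0 1) i).map_eq,
      HasSubgaussianMGF.id_map_iff (measurable_pi_apply i).aemeasurable] at h_eval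
    convert h_eval.const_mul (w i) using 1
    · ext a; exact mul_comm _ _
    · ext; simp only [coe_pow, coe_nnnorm, Real.norm_eq_abs, sq_abs]; exact (mul_one _).symm
  have h_indep := iIndepFun_pi (μ := fun _ : ι => gaussianReal 0 1) (X := fun i x => x * w i)
    fun i => by fun_prop
  have h_sum := HasSubgaussianMGF.sum_of_iIndepFun h_indep (s := Finset.univ) fun i _ => h_coord i
  rwa [EuclideanSpace.nnnorm_eq, NNReal.sq_sqrt]

theorem stmt9_general (n : ℕ) (τ : ℝ) (hτ : 0 < τ)
    (u v : EuclideanSpace ℝ (Fin n)) :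
    (Measure.pi fun _ : Fin n => gaussianReal 0 1)
        {a : Fin n → ℝ |
          Real.sign (|∑ i, a i * u i| - τ) ≠ Real.sign (|∑ i, a i * v i| - τ) ∧
          Real.sign (∑ i, a i * u i) ≠ Real.sign (∑ i, a i * v i)}
      ≤ ENNReal.ofReal (4 * Real.exp (-τ ^ 2 / (2 * ‖u - v‖ ^ 2))) := by
  set μ := Measure.pi fun _ : Fin n => gaussianReal 0 1
  have h_tail := (hasSubgaussianMGF_sum_mul_pi_gaussianReal (u - v)).measureReal_abs_ge_le hτ.le
  simp only [coe_pow, coe_nnnorm] at h_tail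
  calc μ _ ≤ μ {a | τ ≤ |∑ i, a i * (u - v) i|} := measure_mono fun a ha => by
        simpa [mul_sub] using Real.le_abs_sub_of_sign_ne ha.1 ha.2
    _ = ENNReal.ofReal (μ.real {a | τ ≤ |∑ i, a i * (u - v) i|}) := (ofReal_measureReal).symm
    _ ≤ _ := ENNReal.ofReal_le_ofReal <| by
      linarith [Real.exp_nonneg (-τ ^ 2 / (2 * ‖u - v‖ ^ 2))]

/-- Double separation probability bound: for a standard Gaussian vector `a` in `ℝⁿ`,
`τ > 0` and `u ≠ v`, the probability that `u, v` are separated both by the phaseless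
hyperplane `{|aᵀ·| = τ}` and by the hyperplane `{aᵀ· = 0}` is at most
`4 exp(-τ²/(2‖u-v‖²))`. -/
theorem stmt9 (n : ℕ) (τ : ℝ) (hτ : 0 < τ)
    (u v : EuclideanSpace ℝ (Fin n)) (huv : u ≠ v) :
    (Measure.pi fun _ : Fin n => gaussianReal 0 1)
        {a : Fin n → ℝ |
          Real.sign (|∑ i, a i * u i| - τ) ≠ Real.sign (|∑ i, a i * v i| - τ) ∧
          Real.sign (∑ i, a i * u i) ≠ Real.sign (∑ i, a i * v i)}
      ≤ ENNReal.ofReal (4 * Real.exp (-τ ^ 2 / (2 * ‖u - v‖ ^ 2))) :=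
  stmt9_general n τ hτ u v
end

section
/- Fix $\tau > 0$, $\theta > 0$, a vector $\mathbf{a} \in \mathbb{R}^n$, and points $\mathbf{u},\mathbf{v},\mathbf{p},\mathbf{q} \in \mathbb{R}^n$. Suppose the phaseless hyperplane $\{|\mathbf{a}^\top\cdot| = \tau\}$ $\theta$-well-separates $\mathbf{u}$ and $\mathbf{v}$, meaning: (i) $\mathrm{sign}(|\mathbf{a}^\top\mathbf{u}|-\tau) \ne \mathrm{sign}(|\mathbf{a}^\top\mathbf{v}|-\tau)$, and (ii) $||\mathbf{a}^\top\mathbf{u}|-\tau| \ge \theta\,d$ and $||\mathbf{a}^\top\mathbf{v}|-\tau| \ge \theta\,d$, where $d = \min\{\|\mathbf{u}-\mathbf{v}\|_2,\|\mathbf{u}+\mathbf{v}\|_2\}$. If furthermore $\min\{|\mathbf{a}^\top(\mathbf{p}-\mathbf{u})|, |\mathbf{a}^\top(\mathbf{p}+\mathbf{u})|\} < \theta d / 2$ and $\min\{|\mathbf{a}^\top(\mathbf{q}-\mathbf{v})|, |\mathbf{a}^\top(\mathbf{q}+\mathbf{v})|\} < \theta d / 2$, then $\mathrm{sign}(|\mathbf{a}^\top\mathbf{p}|-\tau)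 \ne \mathrm{sign}(|\mathbf{a}^\top\mathbf{q}|-\tau)$, i.e., $\mathbf{p}$ and $\mathbf{q}$ are separated by the phaseless hyperplane. -/
/-! Up to phase, `x ↦ |⟪a, x⟫|` moves by at most `min |⟪a, p - u⟫| |⟪a, p + u⟫| < θd/2` from `u`
to `p`, while `|⟪a, u⟫|` is at distance at least `θd` from `τ`; so `p` stays on the side of `u`,
and likewise `q` on the side of `v`. -/

open scoped RealInnerProductSpace

/-- `sgn t = 1` if `t ≥ 0` and `-1` otherwise. -/
noncomputable def sgn (t : ℝ) : ℝ := if 0 ≤ t then 1 else -1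

theorem sgn_eq_of_abs_sub_lt_abs {s t : ℝ} (h : |s - t| < |t|) : sgn s = sgn t := by
  unfold sgn
  rcases abs_cases t with ⟨ht, _⟩ | ⟨ht, _⟩ <;> rcases abs_cases (s - t) with ⟨hst, _⟩ | ⟨hst, _⟩ <;>
    split_ifs <;> first | rfl | linarith

theorem abs_abs_sub_abs_le_min (x y : ℝ) : |(|x| - |y|)| ≤ min |x - y| |x + y| :=
  le_min (abs_abs_sub_abs_le_abs_sub x y) (by simpa using abs_abs_sub_abs_le_abs_sub x (-y))

theorem sgn_abs_inner_sub_eq_of_min_lt {E : Type*} [NormedAddCommGroup E] [InnerProductSpace ℝ E]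
    {a p u : E} {τ : ℝ} (h : min |⟪a, p - u⟫| |⟪a, p + u⟫| < |(|⟪a, u⟫| - τ)|) :
    sgn (|⟪a, p⟫| - τ) = sgn (|⟪a, u⟫| - τ) := by
  apply sgn_eq_of_abs_sub_lt_abs
  rw [sub_sub_sub_cancel_right]
  rw [inner_sub_right, inner_add_right] at h
  exact (abs_abs_sub_abs_le_min _ _).trans_lt h

theorem stmt11_general (n : ℕ) (τ θ : ℝ)
    (a u v p q : EuclideanSpace ℝ (Fin n)) (d : ℝ)
    (hsep : sgn (|⟪a, u⟫| - τ) ≠ sgn (|⟪a, v⟫| - τ))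
    (hwu : θ * d ≤ abs (|⟪a, u⟫| - τ)) (hwv : θ * d ≤ abs (|⟪a, v⟫| - τ))
    (hp : min |⟪a, p - u⟫| |⟪a, p + u⟫| < θ * d / 2)
    (hq : min |⟪a, q - v⟫| |⟪a, q + v⟫| < θ * d / 2) :
    sgn (|⟪a, p⟫| - τ) ≠ sgn (|⟪a, q⟫| - τ) := by
  have hθd : 0 < θ * d := by linarith [(le_min (abs_nonneg _) (abs_nonneg _)).trans_lt hp]
  rw [sgn_abs_inner_sub_eq_of_min_lt (hp.trans_le (by linarith)),
    sgn_abs_inner_sub_eq_of_min_lt (hq.trans_le (by linarith))]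
  exact hsep

/-- Stability of `θ`-well-separation: if the phaseless hyperplane `{|aᵀ·| = τ}`
`θ`-well-separates `u` and `v` (with `d = min(‖u-v‖, ‖u+v‖)`), and `p` (resp. `q`)
is close to `u` (resp. `v`) in the sense that
`min(|aᵀ(p-u)|, |aᵀ(p+u)|) < θd/2` and `min(|aᵀ(q-v)|, |aᵀ(q+v)|) < θd/2`,
then the phaseless hyperplane separates `p` and `q`. -/
theorem stmt11 (n : ℕ) (τ θ : ℝ) (hτ : 0 < τ) (hθ : 0 < θ)
    (a u v p q : EuclideanSpace ℝ (Fin n)) (d : ℝ)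
    (hd : d = min ‖u - v‖ ‖u + v‖)
    (hsep : sgn (|⟪a, u⟫| - τ) ≠ sgn (|⟪a, v⟫| - τ))
    (hwu : θ * d ≤ abs (|⟪a, u⟫| - τ)) (hwv : θ * d ≤ abs (|⟪a, v⟫| - τ))
    (hp : min |⟪a, p - u⟫| |⟪a, p + u⟫| < θ * d / 2)
    (hq : min |⟪a, q - v⟫| |⟪a, q + v⟫| < θ * d / 2) :
    sgn (|⟪a, p⟫| - τ) ≠ sgn (|⟪a, q⟫| - τ) :=
  stmt11_general n τ θ a u v p q d hsep hwu hwv hp hq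
end

section
/- Let $\tau > 0$, define $g(a,b) = \sqrt{2/\pi}\,\exp\big(-\frac{\tau^2}{2(a^2+b^2)}\big)\frac{\tau^2 a^2 + b^2(a^2+b^2)}{(a^2+b^2)^{5/2}}$ and $h(a,b) = \sqrt{2/\pi}\,\exp\big(-\frac{\tau^2}{2(a^2+b^2)}\big)\frac{ab(a^2+b^2-\tau^2)}{(a^2+b^2)^{5/2}}$, and set $\eta = \sqrt{\pi e / 2}\,\tau$ and $F(a,b) = \sqrt{(1-\eta g(a,b))^2 + (\eta h(a,b))^2}$. Then for $0 < \alpha \le \beta$, $\sup_{a^2+b^2 \in [\alpha^2,\beta^2]} F(a,b) = \max\Big\{\max_{w \in [\tau/\beta, \tau/\alpha]} \big|1 - w^3 e^{(1-w^2)/2}\big|,\ \max_{w \in [\tau/\beta, \tau/\alpha]} \big|1 - w\, e^{(1-w^2)/2}\big|\Big\}$. -/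
/-- The function `g_η(a,b)` from the step-size analysis (with threshold `τ`). -/
noncomputable def gfun (τ a b : ℝ) : ℝ :=
  Real.sqrt (2 / Real.pi) * Real.exp (-τ ^ 2 / (2 * (a ^ 2 + b ^ 2))) *
    ((τ ^ 2 * a ^ 2 + b ^ 2 * (a ^ 2 + b ^ 2)) / Real.sqrt ((a ^ 2 + b ^ 2) ^ 5))

/-- The function `h_η(a,b)` from the step-size analysis (with threshold `τ`). -/
noncomputable def hfun (τ a b : ℝ) : ℝ :=
  Real.sqrt (2 / Real.pi) * Real.exp (-τ ^ 2 / (2 * (a ^ 2 + b ^ 2))) *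
    (a * b * (a ^ 2 + b ^ 2 - τ ^ 2) / Real.sqrt ((a ^ 2 + b ^ 2) ^ 5))

/-- `F(a,b) = √((1 - η g(a,b))² + (η h(a,b))²)` with `η = √(πe/2) τ`. -/
noncomputable def Ffun (τ a b : ℝ) : ℝ :=
  Real.sqrt ((1 - Real.sqrt (Real.pi * Real.exp 1 / 2) * τ * gfun τ a b) ^ 2
    + (Real.sqrt (Real.pi * Real.exp 1 / 2) * τ * hfun τ a b) ^ 2)

/-!
Write `r = √(a² + b²)`, `w = τ / r` and `E = exp ((1 - w²) / 2)`. The normalising constant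
`η = √(πe/2) τ` is chosen so that `η g = E ((a/r)² w³ + (b/r)² w)` and
`η h = E (a/r) (b/r) (w - w³)`. Since `(a/r)² + (b/r)² = 1`, this makes
`F² = (a/r)² (1 - w³E)² + (b/r)² (1 - wE)²` a convex combination of the squared values on
the two axes, so `F` is at most the larger of them, with equality on the axes. As `(a, b)`
ranges over the annulus, `w` ranges over `[τ/β, τ/α]`.
-/

open Real Set

lemma sqrt_pi_exp_mul_gaussian (τ : ℝ) {r : ℝ} (hr : r ≠ 0) :
    √(π * exp 1 / 2) * (√(2 / π) * exp (-τ ^ 2 / (2 * r ^ 2)))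
      = exp ((1 - (τ / r) ^ 2) / 2) := by
  rw [← mul_assoc, ← sqrt_mul (by positivity),
    show π * exp 1 / 2 * (2 / π) = exp 1 by field_simp, ← exp_half, ← exp_add]
  congr 1
  field_simp
  ring

lemma sqrt_sq_pow_five {r : ℝ} (hr : 0 ≤ r) : √((r ^ 2) ^ 5) = r ^ 5 := by
  rw [pow_right_comm, sqrt_sq (by positivity)]

lemma sqrt_mul_sq_add_mul_sq_le_max {s t : ℝ} (x y : ℝ) (hs : 0 ≤ s) (ht : 0 ≤ t)
    (hst : s + t = 1) : √(s * x ^ 2 + t * y ^ 2) ≤ max |x| |y| := by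
  set M := max |x| |y|
  have hx : x ^ 2 ≤ M ^ 2 := by
    rw [← sq_abs]; exact pow_le_pow_left₀ (abs_nonneg x) (le_max_left _ _) 2
  have hy : y ^ 2 ≤ M ^ 2 := by
    rw [← sq_abs]; exact pow_le_pow_left₀ (abs_nonneg y) (le_max_right _ _) 2
  refine sqrt_le_iff.mpr ⟨(abs_nonneg x).trans (le_max_left _ _), ?_⟩
  calc s * x ^ 2 + t * y ^ 2 ≤ s * M ^ 2 + t * M ^ 2 := by gcongr
    _ = M ^ 2 := by rw [← add_mul, hst, one_mul]

section Polar

variable {τ a b r : ℝ}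

lemma div_sq_add_div_sq_eq_one (hr : r ≠ 0) (hab : a ^ 2 + b ^ 2 = r ^ 2) :
    (a / r) ^ 2 + (b / r) ^ 2 = 1 := by
  rw [div_pow, div_pow, ← add_div, hab, div_self (by positivity)]

lemma eta_mul_gfun (hr : 0 < r) (hab : a ^ 2 + b ^ 2 = r ^ 2) :
    √(π * exp 1 / 2) * τ * gfun τ a b
      = exp ((1 - (τ / r) ^ 2) / 2) * ((a / r) ^ 2 * (τ / r) ^ 3 + (b / r) ^ 2 * (τ / r)) := by
  rw [gfun, hab, sqrt_sq_pow_five hr.le, ← sqrt_pi_exp_mul_gaussian τ hr.ne']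
  field_simp

lemma eta_mul_hfun (hr : 0 < r) (hab : a ^ 2 + b ^ 2 = r ^ 2) :
    √(π * exp 1 / 2) * τ * hfun τ a b
      = exp ((1 - (τ / r) ^ 2) / 2) * ((a / r) * (b / r) * (τ / r - (τ / r) ^ 3)) := by
  rw [hfun, hab, sqrt_sq_pow_five hr.le, ← sqrt_pi_exp_mul_gaussian τ hr.ne']
  field_simp

lemma Ffun_eq_sqrt (hr : 0 < r) (hab : a ^ 2 + b ^ 2 = r ^ 2) :
    Ffun τ a b = √((a / r) ^ 2 * (1 - (τ / r) ^ 3 * exp ((1 - (τ / r) ^ 2) / 2)) ^ 2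
      + (b / r) ^ 2 * (1 - τ / r * exp ((1 - (τ / r) ^ 2) / 2)) ^ 2) := by
  rw [Ffun, eta_mul_gfun hr hab, eta_mul_hfun hr hab]
  congr 1
  set E := exp ((1 - (τ / r) ^ 2) / 2)
  linear_combination ((a / r) ^ 2 * ((τ / r) ^ 3 * E) ^ 2 + (b / r) ^ 2 * (τ / r * E) ^ 2 - 1)
    * div_sq_add_div_sq_eq_one hr.ne' hab

lemma Ffun_le_max (hr : 0 < r) (hab : a ^ 2 + b ^ 2 = r ^ 2) :
    Ffun τ a b ≤ max |1 - (τ / r) ^ 3 * exp ((1 - (τ / r) ^ 2) / 2)|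
      |1 - τ / r * exp ((1 - (τ / r) ^ 2) / 2)| := by
  rw [Ffun_eq_sqrt hr hab]
  exact sqrt_mul_sq_add_mul_sq_le_max _ _ (sq_nonneg _) (sq_nonneg _)
    (div_sq_add_div_sq_eq_one hr.ne' hab)

end Polar

lemma Ffun_self_zero (τ : ℝ) {r : ℝ} (hr : 0 < r) :
    Ffun τ r 0 = |1 - (τ / r) ^ 3 * exp ((1 - (τ / r) ^ 2) / 2)| := by
  rw [Ffun_eq_sqrt hr (by ring)]
  simp [hr.ne', sqrt_sq_eq_abs]

lemma Ffun_zero_self (τ : ℝ) {r : ℝ} (hr : 0 < r) :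
    Ffun τ 0 r = |1 - τ / r * exp ((1 - (τ / r) ^ 2) / 2)| := by
  rw [Ffun_eq_sqrt hr (by ring)]
  simp [hr.ne', sqrt_sq_eq_abs]

lemma div_mem_Icc_div_iff {τ α β r : ℝ} (hτ : 0 < τ) (hα : 0 < α) (hβ : 0 < β) (hr : 0 < r) :
    τ / r ∈ Icc (τ / β) (τ / α) ↔ α ^ 2 ≤ r ^ 2 ∧ r ^ 2 ≤ β ^ 2 := by
  rw [mem_Icc, div_le_div_iff_of_pos_left hτ hβ hr, div_le_div_iff_of_pos_left hτ hr hα,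
    pow_le_pow_iff_left₀ hα.le hr.le two_ne_zero, pow_le_pow_iff_left₀ hr.le hβ.le two_ne_zero,
    and_comm]

/-- Maximization of the contraction factor: for `0 < α ≤ β` and `τ > 0`,
`sup_{α² ≤ a²+b² ≤ β²} F(a,b)` equals the maximum of
`max_{w ∈ [τ/β, τ/α]} |1 - w³ e^{(1-w²)/2}|` and
`max_{w ∈ [τ/β, τ/α]} |1 - w e^{(1-w²)/2}|`. -/
theorem stmt15 (τ α β : ℝ) (hτ : 0 < τ) (hα : 0 < α) (hαβ : α ≤ β) :
    sSup ((fun p : ℝ × ℝ => Ffun τ p.1 p.2) ''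
        {p : ℝ × ℝ | α ^ 2 ≤ p.1 ^ 2 + p.2 ^ 2 ∧ p.1 ^ 2 + p.2 ^ 2 ≤ β ^ 2})
      = max
          (sSup ((fun w : ℝ => |1 - w ^ 3 * Real.exp ((1 - w ^ 2) / 2)|) ''
            Set.Icc (τ / β) (τ / α)))
          (sSup ((fun w : ℝ => |1 - w * Real.exp ((1 - w ^ 2) / 2)|) ''
            Set.Icc (τ / β) (τ / α))) := by
  have hβ : 0 < β := hα.trans_le hαβ
  set K := Icc (τ / β) (τ / α)
  have hK : K.Nonempty := nonempty_Icc.2 (by gcongr)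
  rw [← csSup_union (isCompact_Icc.image (by fun_prop)).bddAbove (hK.image _)
    (isCompact_Icc.image (by fun_prop)).bddAbove (hK.image _)]
  refine csSup_eq_csSup_of_forall_exists_le ?_ ?_
  · rintro _ ⟨p, hp, rfl⟩
    set r := √(p.1 ^ 2 + p.2 ^ 2)
    have hab : p.1 ^ 2 + p.2 ^ 2 = r ^ 2 := (sq_sqrt (by positivity)).symm
    have hr : 0 < r := sqrt_pos.2 ((by positivity : (0 : ℝ) < α ^ 2).trans_le hp.1)
    have hw : τ / r ∈ K := (div_mem_Icc_div_iff hτ hα hβ hr).2 (hab ▸ hp)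
    rcases le_max_iff.1 (Ffun_le_max (τ := τ) hr hab) with h | h
    exacts [⟨_, Or.inl ⟨_, hw, rfl⟩, h⟩, ⟨_, Or.inr ⟨_, hw, rfl⟩, h⟩]
  · have hr : ∀ w ∈ K, 0 < τ / w := fun w hw => div_pos hτ ((div_pos hτ hβ).trans_le hw.1)
    have hmem : ∀ w ∈ K, α ^ 2 ≤ (τ / w) ^ 2 ∧ (τ / w) ^ 2 ≤ β ^ 2 := fun w hw =>
      (div_mem_Icc_div_iff hτ hα hβ (hr w hw)).1 (by rwa [div_div_cancel₀ hτ.ne'])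
    rintro _ (⟨w, hw, rfl⟩ | ⟨w, hw, rfl⟩)
    · refine ⟨_, ⟨(τ / w, 0), by simpa using hmem w hw, rfl⟩, ?_⟩
      dsimp only
      rw [Ffun_self_zero τ (hr w hw), div_div_cancel₀ hτ.ne']
    · refine ⟨_, ⟨(0, τ / w), by simpa using hmem w hw, rfl⟩, ?_⟩
      dsimp only
      rw [Ffun_zero_self τ (hr w hw), div_div_cancel₀ hτ.ne']
end
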